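/- The only pairs (w₁,w₂) of positive integers with w₁ ≤ w₂, gcd(w₁,w₂) = 1, w₁ + w₂ divisible by 4, and (w₁+w₂)³/(w₁w₂) < 64, are (1,3), (3,5), and (5,7). -/
import Mathlib


theorem stmt5 (w₁ w₂ : ℕ) :
    (0 < w₁ ∧ w₁ ≤ w₂ ∧ Nat.gcd w₁ w₂ = 1 ∧ 4 ∣ (w₁ + w₂) ∧
      ((w₁ : ℚ) + w₂) ^ 3 / ((w₁ : ℚ) * w₂) < 64) ↔
    ((w₁ = 1 ∧ w₂ = 3) ∨ (w₁ = 3 ∧ w₂ = 5) ∨ (w₁ = 5 ∧ w₂ = 7)) := by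
  constructor
  · rintro ⟨h1, h2, h3, h4, h5⟩
    have hw2 : 0 < w₂ := lt_of_lt_of_le h1 h2
    have hq1 : (0:ℚ) < w₁ := by exact_mod_cast h1
    have hq2 : (0:ℚ) < w₂ := by exact_mod_cast hw2
    have hq : ((w₁:ℚ) + w₂) ^ 3 < 64 * (w₁ * w₂) := by
      rw [div_lt_iff₀ (by positivity)] at h5; linarith
    have hn : (w₁ + w₂) ^ 3 < 64 * (w₁ * w₂) := by exact_mod_cast hq
    have hbq : (w₁:ℚ) + w₂ < 16 := by
      nlinarith [sq_nonneg ((w₂:ℚ) - w₁), sq_nonneg ((w₁:ℚ) + w₂)]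
    have hb : w₁ + w₂ < 16 := by exact_mod_cast hbq
    have hb1 : w₁ ≤ 15 := by omega
    have hb2 : w₂ ≤ 15 := by omega
    clear h5 hq hbq hq1 hq2 hb hw2
    interval_cases w₁ <;> interval_cases w₂ <;> revert h3 h4 hn <;> decide
  · rintro (⟨rfl, rfl⟩ | ⟨rfl, rfl⟩ | ⟨rfl, rfl⟩) <;> norm_num
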